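/- For all i ≥ -1 and m, n ∈ ℤ with i odd: N(m α_i + n α_{i+1}) = (m - n/γ_{i+2}) · (n√Δ + m N_i - n N_i/γ_{i+2}), where N_i = |N(α_i)|, Δ is the discriminant, and γ_{i+2} is the complete quotient. -/

import Mathlib

open Real Filter

noncomputable def omg (D : ℕ) : ℝ := if D % 4 = 1 then (1 + Real.sqrt D) / 2 else Real.sqrt D

noncomputable def omgc (D : ℕ) : ℝ := if D % 4 = 1 then (1 - Real.sqrt D) / 2 else -Real.sqrt D

noncomputable def sigmaD (D : ℕ) : ℝ := omg D + (⌊-omgc D⌋ : ℤ)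

noncomputable def gam (D : ℕ) : ℕ → ℝ
  | 0 => sigmaD D
  | n + 1 => 1 / (gam D n - ⌊gam D n⌋)

/-- partial quotients of the continued fraction of σ_D -/
noncomputable def uD (D : ℕ) (n : ℕ) : ℤ := ⌊gam D n⌋

noncomputable def emb1 (D : ℕ) (x : ℤ × ℤ) : ℝ := (x.1 : ℝ) + (x.2 : ℝ) * omg D

noncomputable def emb2 (D : ℕ) (x : ℤ × ℤ) : ℝ := (x.1 : ℝ) + (x.2 : ℝ) * omgc D

def conjp (D : ℕ) (x : ℤ × ℤ) : ℤ × ℤ := if D % 4 = 1 then (x.1 + x.2, -x.2) else (x.1, -x.2)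

def TotPos (D : ℕ) (x : ℤ × ℤ) : Prop := 0 < emb1 D x ∧ 0 < emb2 D x

def Indec (D : ℕ) (x : ℤ × ℤ) : Prop :=
  TotPos D x ∧ ¬ ∃ y z : ℤ × ℤ, TotPos D y ∧ TotPos D z ∧ x = y + z

noncomputable def Nm (D : ℕ) (x : ℤ × ℤ) : ℝ := emb1 D x * emb2 D x

noncomputable def disc (D : ℕ) : ℝ := if D % 4 = 1 then (D : ℝ) else 4 * (D : ℝ)

def UniqDec (D : ℕ) (x : ℤ × ℤ) : Prop :=
  ∃! m : Multiset (ℤ × ℤ), (∀ y ∈ m, Indec D y) ∧ m.sum = x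

/-- first real embedding of α_i = p_i - q_i ω_D' -/
noncomputable def ar (D : ℕ) (p q : ℤ → ℤ) (i : ℤ) : ℝ := (p i : ℝ) - (q i : ℝ) * omgc D

/-- second real embedding (Galois conjugate) of α_i -/
noncomputable def ac (D : ℕ) (p q : ℤ → ℤ) (i : ℤ) : ℝ := (p i : ℝ) - (q i : ℝ) * omg D

/-- first embedding of the semiconvergent α_{i,r} = α_i + r α_{i+1} -/
noncomputable def ar2 (D : ℕ) (p q : ℤ → ℤ) (i r : ℤ) : ℝ := ar D p q i + (r : ℝ) * ar D p q (i + 1)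

/-- conjugate embedding of the semiconvergent α_{i,r} -/
noncomputable def ac2 (D : ℕ) (p q : ℤ → ℤ) (i r : ℤ) : ℝ := ac D p q i + (r : ℝ) * ac D p q (i + 1)

/-- N_i = |N(α_i)| -/
noncomputable def Ni (D : ℕ) (p q : ℤ → ℤ) (i : ℤ) : ℝ := |ar D p q i * ac D p q i|

/-!
Write `α_i = p_i - q_i ω'` and `α_i' = p_i - q_i ω` for its conjugate. Both satisfy the convergent
recurrence `x_{i+2} = u_{i+2} x_{i+1} + x_i`. Since `p_0 = ⌈u_0/2⌉ = ⌊ω⌋` and `γ_1 = 1/fract ω`,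
the initial values satisfy `α'_{-1} = -γ_1 α'_0`, and since `γ_{i+3} (γ_{i+2} - u_{i+2}) = 1` the
recurrence propagates this to `α'_i = -γ_{i+2} α'_{i+1}` for all `i ≥ -1`. Hence the `α'_i`
alternate in sign while the `α_i` stay positive, so `N_i = α_i α'_i` for odd `i`. The Casoratian
`α_i α'_{i+1} - α_{i+1} α'_i` changes sign at each step and starts at `ω' - ω = -√Δ`. Substituting
`α'_{i+1} = -α'_i / γ_{i+2}` into `N(m α_i + n α_{i+1})` gives the formula.
-/

def SatisfiesConvergentRec (a : ℕ → ℝ) (x : ℤ → ℝ) : Prop :=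
  ∀ i : ℤ, -1 ≤ i → x (i + 2) = a (i + 2).toNat * x (i + 1) + x i

namespace SatisfiesConvergentRec

variable {a : ℕ → ℝ} {x y : ℤ → ℝ}

theorem casoratian (hx : SatisfiesConvergentRec a x) (hy : SatisfiesConvergentRec a y) :
    ∀ i : ℤ, -1 ≤ i → x i * y (i + 1) - x (i + 1) * y i =
      (-1 : ℝ) ^ (i + 1) * (x (-1) * y 0 - x 0 * y (-1)) := by
  intro i hi
  induction i, hi using Int.leInduction with
  | base => norm_num
  | succ i hi ih =>
    rw [zpow_add_one₀ (by norm_num), mul_comm _ (-1 : ℝ), mul_assoc, ← ih, add_assoc,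
      one_add_one_eq_two, hx i hi, hy i hi]
    ring

theorem pos (hx : SatisfiesConvergentRec a x) (ha : ∀ i : ℤ, -1 ≤ i → 0 ≤ a (i + 2).toNat)
    (hneg_one : 0 < x (-1)) (hzero : 0 < x 0) : ∀ i : ℤ, -1 ≤ i → 0 < x i := by
  suffices ∀ i : ℤ, -1 ≤ i → 0 < x i ∧ 0 < x (i + 1) from fun i hi => (this i hi).1
  intro i hi
  induction i, hi using Int.leInduction with
  | base => exact ⟨hneg_one, by simpa using hzero⟩
  | succ i hi ih =>
    refine ⟨ih.2, ?_⟩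
    rw [add_assoc, one_add_one_eq_two, hx i hi]
    exact add_pos_of_nonneg_of_pos (mul_nonneg (ha i hi) ih.2.le) ih.1

theorem eq_neg_mul_succ {γ : ℕ → ℝ} (hγ : ∀ n, γ (n + 1) * Int.fract (γ n) = 1)
    (hx : SatisfiesConvergentRec (fun n => ⌊γ n⌋) x) (h : x (-1) = -γ 1 * x 0) :
    ∀ i : ℤ, -1 ≤ i → x i = -γ (i + 2).toNat * x (i + 1) := by
  intro i hi
  induction i, hi using Int.leInduction with
  | base => simpa using h
  | succ i hi ih =>
    have hidx : (i + 1 + 2).toNat = (i + 2).toNat + 1 := by omega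
    rw [hidx, add_assoc, one_add_one_eq_two, hx i hi, ih]
    linear_combination (-x (i + 1)) * hγ (i + 2).toNat
      - x (i + 1) * γ ((i + 2).toNat + 1) * Int.self_sub_floor (γ (i + 2).toNat)

end SatisfiesConvergentRec

theorem pos_neg_one_zpow_mul_of_eq_neg_mul_succ {x : ℤ → ℝ} {γ : ℕ → ℝ}
    (hγ : ∀ i : ℤ, -1 ≤ i → 0 < γ (i + 2).toNat)
    (hx : ∀ i : ℤ, -1 ≤ i → x i = -γ (i + 2).toNat * x (i + 1)) (h : 0 < x (-1)) :
    ∀ i : ℤ, -1 ≤ i → 0 < (-1 : ℝ) ^ (i + 1) * x i := by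
  intro i hi
  induction i, hi using Int.leInduction with
  | base => simpa using h
  | succ i hi ih =>
    have hflip :
        (-1 : ℝ) ^ (i + 1) * x i = γ (i + 2).toNat * ((-1) ^ (i + 1 + 1) * x (i + 1)) := by
      rw [hx i hi, zpow_add_one₀ (by norm_num) (i + 1)]
      ring
    rw [hflip] at ih
    exact pos_of_mul_pos_right ih (hγ i hi).le

theorem mul_add_mul_mul_eq_of_eq_neg_mul {a b a' b' g s N m n : ℝ} (hg : g ≠ 0)
    (ha' : a' = -g * b') (hN : N = a * a') (hs : s = b * a' - a * b') :
    (m * a + n * b) * (m * a' + n * b') = (m - n / g) * (n * s + m * N - n * N / g) := by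
  subst ha' hN hs
  field_simp
  ring

theorem Nat.not_isSquare_of_squarefree {D : ℕ} (hsq : Squarefree D) (h1 : D ≠ 1) :
    ¬IsSquare D := by
  rintro ⟨r, rfl⟩
  exact h1 (by simp [Nat.isUnit_iff.mp (hsq r dvd_rfl)])

section QuadraticField

variable {D : ℕ}

theorem irrational_omg (hD : ¬IsSquare D) : Irrational (omg D) := by
  have h := irrational_sqrt_natCast_iff.mpr hD
  unfold omg
  split_ifs
  · simpa using (h.ratCast_add 1).div_ratCast (by norm_num : (2 : ℚ) ≠ 0)
  · exact h

theorem omg_nonneg (D : ℕ) : 0 ≤ omg D := by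
  unfold omg
  split_ifs <;> positivity

theorem omgc_neg (hD : 2 ≤ D) : omgc D < 0 := by
  have : 1 < √(D : ℝ) := by
    rw [lt_sqrt zero_le_one]
    exact_mod_cast hD
  unfold omgc
  split_ifs <;> linarith

theorem omg_sub_omgc (D : ℕ) : omg D - omgc D = √(disc D) := by
  unfold omg omgc disc
  split_ifs
  · ring
  · rw [sqrt_mul zero_le_four, show (4 : ℝ) = 2 ^ 2 by norm_num, sqrt_sq zero_le_two]
    ring

theorem uD_zero (D : ℕ) : uD D 0 = 2 * ⌊omg D⌋ - if D % 4 = 1 then 1 else 0 := by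
  rw [uD, gam, sigmaD, Int.floor_add_intCast]
  unfold omg omgc
  split_ifs
  · rw [show -((1 - √(D : ℝ)) / 2) = (1 + √(D : ℝ)) / 2 - 1 by ring, Int.floor_sub_one]
    ring
  · rw [neg_neg]
    ring

theorem ceil_uD_zero_div_two (D : ℕ) : ⌈(uD D 0 : ℚ) / 2⌉ = ⌊omg D⌋ := by
  rw [uD_zero, Int.ceil_eq_iff]
  split_ifs <;> push_cast <;> constructor <;> linarith

theorem irrational_gam (hω : Irrational (omg D)) : ∀ n, Irrational (gam D n)
  | 0 => hω.add_intCast _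
  | n + 1 => by
    rw [gam, one_div]
    exact ((irrational_gam hω n).sub_intCast _).inv

theorem gam_succ_mul_fract (hω : Irrational (omg D)) (n : ℕ) :
    gam D (n + 1) * Int.fract (gam D n) = 1 := by
  rw [gam, Int.self_sub_floor, one_div, inv_mul_cancel₀]
  exact (Int.fract_pos.mpr ((irrational_gam hω n).ne_int _)).ne'

theorem fract_gam_zero (D : ℕ) : Int.fract (gam D 0) = Int.fract (omg D) :=
  Int.fract_add_intCast _ _

theorem one_lt_gam (hω : Irrational (omg D)) {n : ℕ} (hn : n ≠ 0) : 1 < gam D n := by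
  obtain ⟨k, rfl⟩ := Nat.exists_eq_succ_of_ne_zero hn
  rw [gam, Int.self_sub_floor, one_lt_div (Int.fract_pos.mpr ((irrational_gam hω k).ne_int _))]
  exact Int.fract_lt_one _

end QuadraticField

theorem satisfiesConvergentRec_sub_mul {u : ℕ → ℤ} {p q : ℤ → ℤ}
    (hp : ∀ i : ℤ, -1 ≤ i → p (i + 2) = u (i + 2).toNat * p (i + 1) + p i)
    (hq : ∀ i : ℤ, -1 ≤ i → q (i + 2) = u (i + 2).toNat * q (i + 1) + q i) (c : ℝ) :
    SatisfiesConvergentRec (fun n => u n) (fun i => p i - q i * c) := by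
  intro i hi
  simp only [hp i hi, hq i hi]
  push_cast
  ring

structure IsConvergentSeq (D : ℕ) (p q : ℤ → ℤ) : Prop where
  p_neg_one : p (-1) = 1
  q_neg_one : q (-1) = 0
  p_zero : p 0 = ⌊omg D⌋
  q_zero : q 0 = 1
  p_rec : ∀ i : ℤ, -1 ≤ i → p (i + 2) = uD D (i + 2).toNat * p (i + 1) + p i
  q_rec : ∀ i : ℤ, -1 ≤ i → q (i + 2) = uD D (i + 2).toNat * q (i + 1) + q i

namespace IsConvergentSeq

variable {D : ℕ} {p q : ℤ → ℤ}

theorem ar_neg_one (h : IsConvergentSeq D p q) : ar D p q (-1) = 1 := by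
  simp [ar, h.p_neg_one, h.q_neg_one]

theorem ac_neg_one (h : IsConvergentSeq D p q) : ac D p q (-1) = 1 := by
  simp [ac, h.p_neg_one, h.q_neg_one]

theorem ar_zero (h : IsConvergentSeq D p q) : ar D p q 0 = ⌊omg D⌋ - omgc D := by
  simp [ar, h.p_zero, h.q_zero]

theorem ac_zero (h : IsConvergentSeq D p q) : ac D p q 0 = ⌊omg D⌋ - omg D := by
  simp [ac, h.p_zero, h.q_zero]

theorem satisfiesConvergentRec_ar (h : IsConvergentSeq D p q) :
    SatisfiesConvergentRec (fun n => uD D n) (ar D p q) :=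
  satisfiesConvergentRec_sub_mul h.p_rec h.q_rec _

theorem satisfiesConvergentRec_ac (h : IsConvergentSeq D p q) :
    SatisfiesConvergentRec (fun n => uD D n) (ac D p q) :=
  satisfiesConvergentRec_sub_mul h.p_rec h.q_rec _

theorem ac_eq_neg_gam_mul_succ (h : IsConvergentSeq D p q) (hω : Irrational (omg D)) :
    ∀ i : ℤ, -1 ≤ i → ac D p q i = -gam D (i + 2).toNat * ac D p q (i + 1) := by
  refine h.satisfiesConvergentRec_ac.eq_neg_mul_succ (gam_succ_mul_fract hω) ?_
  have h1 := gam_succ_mul_fract hω 0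
  rw [fract_gam_zero, ← Int.self_sub_floor] at h1
  rw [h.ac_neg_one, h.ac_zero]
  linear_combination -h1

theorem ar_pos (h : IsConvergentSeq D p q) (hD : 2 ≤ D) (hω : Irrational (omg D)) :
    ∀ i : ℤ, -1 ≤ i → 0 < ar D p q i := by
  refine h.satisfiesConvergentRec_ar.pos (fun i hi => ?_) (by simp [h.ar_neg_one]) ?_
  · exact_mod_cast Int.floor_nonneg.mpr (zero_le_one.trans (one_lt_gam hω (by omega)).le)
  · have : (0 : ℝ) ≤ ⌊omg D⌋ := by exact_mod_cast Int.floor_nonneg.mpr (omg_nonneg D)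
    linarith [h.ar_zero, omgc_neg hD]

theorem ac_pos_of_odd (h : IsConvergentSeq D p q) (hω : Irrational (omg D)) {i : ℤ}
    (hi : -1 ≤ i) (hodd : Odd i) : 0 < ac D p q i := by
  simpa [hodd.add_one.neg_one_zpow] using pos_neg_one_zpow_mul_of_eq_neg_mul_succ
    (fun j hj => zero_lt_one.trans (one_lt_gam hω (by omega)))
    (h.ac_eq_neg_gam_mul_succ hω) (by simp [h.ac_neg_one]) i hi

theorem sqrt_disc_eq_of_odd (h : IsConvergentSeq D p q) {i : ℤ} (hi : -1 ≤ i) (hodd : Odd i) :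
    √(disc D) = ar D p q (i + 1) * ac D p q i - ar D p q i * ac D p q (i + 1) := by
  have hcas := h.satisfiesConvergentRec_ar.casoratian h.satisfiesConvergentRec_ac i hi
  rw [hodd.add_one.neg_one_zpow, h.ar_neg_one, h.ac_neg_one, h.ar_zero, h.ac_zero] at hcas
  rw [← omg_sub_omgc]
  linear_combination hcas

end IsConvergentSeq

theorem stmt14 (D : ℕ)
    (hD2 : 2 ≤ D) (hsq : Squarefree D)
    (p q : ℤ → ℤ)
    (hpm1 : p (-1) = 1) (hqm1 : q (-1) = 0)
    (hp0 : p 0 = ⌈(uD D 0 : ℚ) / 2⌉) (hq0 : q 0 = 1)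
    (hprec : ∀ i : ℤ, -1 ≤ i → p (i + 2) = uD D (i + 2).toNat * p (i + 1) + p i)
    (hqrec : ∀ i : ℤ, -1 ≤ i → q (i + 2) = uD D (i + 2).toNat * q (i + 1) + q i)
 :
    ∀ i : ℤ, -1 ≤ i → Odd i → ∀ m n : ℤ,
      ((m : ℝ) * ar D p q i + (n : ℝ) * ar D p q (i + 1)) *
        ((m : ℝ) * ac D p q i + (n : ℝ) * ac D p q (i + 1)) =
      ((m : ℝ) - (n : ℝ) / gam D (i + 2).toNat) *
        ((n : ℝ) * Real.sqrt (disc D) + (m : ℝ) * Ni D p q i -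
          (n : ℝ) * Ni D p q i / gam D (i + 2).toNat) := by
  intro i hi hodd m n
  have hω : Irrational (omg D) := irrational_omg (Nat.not_isSquare_of_squarefree hsq (by omega))
  have hpq : IsConvergentSeq D p q :=
    ⟨hpm1, hqm1, hp0.trans (ceil_uD_zero_div_two D), hq0, hprec, hqrec⟩
  have hNi : Ni D p q i = ar D p q i * ac D p q i :=
    abs_of_pos (mul_pos (hpq.ar_pos hD2 hω i hi) (hpq.ac_pos_of_odd hω hi hodd))
  exact mul_add_mul_mul_eq_of_eq_neg_mul (zero_lt_one.trans (one_lt_gam hω (by omega))).ne'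
    (hpq.ac_eq_neg_gam_mul_succ hω i hi) hNi (hpq.sqrt_disc_eq_of_odd hi hodd)
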